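/- arXiv:1210.0943 — 5 statements merged into one kernel-verified Lean document; each statement's English description precedes it below -/
import Mathlib

section
/- Let G be a simple graph on a finite vertex type V, and let H be its incidence matrix over ZMod 2 (rows indexed by vertices, columns indexed by edges, with entry 1 exactly when the vertex lies in the edge). For a nonempty finite set C of edges of G, the family of columns of H indexed by C is minimally dependent (linearly dependent, but the columns indexed by any proper subset of C are linearly independent) if, and only if, there exists a cycle in G whose edge set is exactly C. -/
/-!
Over `ZMod 2` a linear dependency among incidence columns is a nonempty set of edges whose
columns sum to zero, i.e. a nonempty edge set meeting every vertex an even number of times.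
The edge set of a cycle is even, and no nonempty proper subset of it is: deleting an edge of the
cycle leaves a path, and the first edge of that path lying in the subset is the only one of the
subset at its initial vertex. Conversely, a nonempty even edge set contains the edges of a cycle,
because an acyclic graph with an edge has a leaf (the end of a longest path). So the minimally
dependent edge sets are exactly the edge sets of cycles.
-/

open Finset

theorem linearIndependent_zmod_two_iff {ι M : Type*} [AddCommGroup M] [Module (ZMod 2) M]
    (v : ι → M) : LinearIndependent (ZMod 2) v ↔ ∀ s : Finset ι, ∑ i ∈ s, v i = 0 → s = ∅ := by
  classical
  rw [linearIndependent_iff']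
  refine ⟨fun h s hs => ?_, fun h s g hg i hi => ?_⟩
  · refine eq_empty_of_forall_notMem fun i hi => one_ne_zero (h s 1 (by simpa using hs) i hi)
  · have hsupp : ∑ j ∈ s with g j ≠ 0, v j = 0 := by
      rw [← hg, sum_filter]
      refine sum_congr rfl fun j _ => ?_
      rcases (by decide : ∀ x : ZMod 2, x = 0 ∨ x = 1) (g j) with h0 | h1 <;> simp [*]
    by_contra hgi
    simpa using (filter_eq_empty_iff.mp (h _ hsupp)) hi hgi

theorem linearIndependent_subtype_zmod_two_iff {ι M : Type*} [AddCommGroup M]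
    [Module (ZMod 2) M] (v : ι → M) (S : Set ι) :
    LinearIndependent (ZMod 2) (fun i : S => v i) ↔
      ∀ s : Finset ι, ↑s ⊆ S → ∑ i ∈ s, v i = 0 → s = ∅ := by
  classical
  rw [linearIndependent_zmod_two_iff]
  refine ⟨fun h s hsS hs => ?_, fun h s hs => ?_⟩
  · have hmap := subtype_map_of_mem (p := (· ∈ S)) hsS
    rw [← hmap, sum_map] at hs
    rw [← hmap, h _ hs, map_empty]
  · have := h (s.map (Function.Embedding.subtype _)) (by simp) (by simpa using hs)
    simpa using this

namespace SimpleGraph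

variable {V : Type*} {G : SimpleGraph V}

theorem IsAcyclic.exists_existsUnique_adj [Finite G.edgeSet] (hG : G.IsAcyclic) {x y : V}
    (hxy : G.Adj x y) : ∃ v, ∃! w, G.Adj v w := by
  have : Nonempty V := ⟨x⟩
  obtain ⟨u, v, p, hp, hmax⟩ := Walk.exists_isPath_forall_isPath_length_le_length G
  have hnil : ¬ p.Nil := by
    have := hmax x y (.cons hxy .nil) (by simp [hxy.ne])
    rw [← Walk.length_eq_zero_iff]
    simp only [Walk.length_cons, Walk.length_nil] at this
    omega
  refine ⟨v, _, (p.adj_penultimate hnil).symm, fun w hvw => ?_⟩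
  refine hG.eq_penultimate_of_adj_end hp hvw (not_not.mp fun hw => ?_)
  have := hmax u w _ (hp.concat hw hvw)
  simp at this

variable [DecidableEq V]

def IsEvenEdgeSet (D : Finset (Sym2 V)) : Prop :=
  ∀ v, Even #{e ∈ D | v ∈ e}

theorem linearIndependent_incidence_iff (S : Set (Sym2 V)) :
    LinearIndependent (ZMod 2) (fun e : S => fun v => if v ∈ (e : Sym2 V) then (1 : ZMod 2) else 0)
      ↔ ∀ D : Finset (Sym2 V), ↑D ⊆ S → IsEvenEdgeSet D → D = ∅ := by
  rw [linearIndependent_subtype_zmod_two_iff (fun e : Sym2 V => fun v => if v ∈ e then 1 else 0)]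
  have hsum : ∀ D : Finset (Sym2 V),
      ∑ e ∈ D, (fun v => if v ∈ e then (1 : ZMod 2) else 0) = 0 ↔ IsEvenEdgeSet D := fun D => by
    simp only [funext_iff, Finset.sum_apply, Finset.sum_boole, Pi.zero_apply,
      ZMod.natCast_eq_zero_iff_even]
    rfl
  simp only [hsum]

theorem linearIndependent_incidence_columns_iff {H : Matrix V G.edgeSet (ZMod 2)}
    (hH : ∀ (v : V) (e : G.edgeSet), H v e = if v ∈ (e : Sym2 V) then 1 else 0)
    (S : Set G.edgeSet) :
    LinearIndependent (ZMod 2) (fun e : S => fun v => H v e.1) ↔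
      ∀ D : Finset (Sym2 V), ↑D ⊆ Subtype.val '' S → IsEvenEdgeSet D → D = ∅ := by
  rw [← linearIndependent_incidence_iff,
    ← linearIndependent_equiv (Equiv.Set.image Subtype.val S Subtype.val_injective)]
  simp only [Function.comp_def, Equiv.Set.image_apply, hH]

theorem exists_isCycle_of_isEvenEdgeSet {D : Finset (Sym2 V)} (hDG : ↑D ⊆ G.edgeSet)
    (hD : IsEvenEdgeSet D) (hne : D.Nonempty) :
    ∃ (u : V) (w : G.Walk u u), w.IsCycle ∧ ∀ e ∈ w.edges, e ∈ D := by
  set K := fromEdgeSet (D : Set (Sym2 V))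
  have hK : ∀ {v w}, K.Adj v w ↔ s(v, w) ∈ D := fun {v w} =>
    ⟨fun h => ((fromEdgeSet_adj _).mp h).1, fun h => (fromEdgeSet_adj _).mpr ⟨h, (hDG h).ne⟩⟩
  have hKG : K ≤ G := fun v w h => hDG (hK.mp h)
  have hcyc : ¬ K.IsAcyclic := by
    have : Finite K.edgeSet := (D.finite_toSet.subset (by simp [K])).to_subtype
    intro hac
    obtain ⟨e, he⟩ := hne
    induction e using Sym2.ind with | _ x y =>
    obtain ⟨v, w, hvw, huniq⟩ := hac.exists_existsUnique_adj (hK.mpr he)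
    have hleaf : ({e ∈ D | v ∈ e} : Finset (Sym2 V)) = {s(v, w)} := by
      ext e
      rw [mem_filter, mem_singleton]
      refine ⟨fun ⟨he, hve⟩ => ?_, fun h => ?_⟩
      · obtain ⟨b, rfl⟩ := Sym2.mem_iff_exists.mp hve
        rw [huniq b (hK.mpr he)]
      · subst h
        exact ⟨hK.mp hvw, Sym2.mem_mk_left _ _⟩
    simpa [hleaf] using hD v
  simp only [IsAcyclic, not_forall, not_not] at hcyc
  obtain ⟨u, w, hw⟩ := hcyc
  refine ⟨u, w.mapLe hKG, hw.mapLe hKG, fun e he => ?_⟩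
  rw [Walk.edges_mapLe_eq_edges] at he
  have heK := w.edges_subset_edgeSet he
  rw [edgeSet_fromEdgeSet] at heK
  exact heK.1

namespace Walk

theorem IsTrail.isEvenEdgeSet_edges_toFinset {u : V} {p : G.Walk u u} (hp : p.IsTrail) :
    IsEvenEdgeSet p.edges.toFinset := by
  intro x
  have := (hp.even_countP_edges_iff x).mpr fun h => absurd rfl h
  rwa [List.countP_eq_length_filter, ← List.toFinset_card_of_nodup (hp.edges_nodup.filter _),
    List.toFinset_filter, filter_congr fun e _ => decide_eq_true_iff] at this

theorem IsPath.not_isEvenEdgeSet {a b : V} {p : G.Walk a b} (hp : p.IsPath)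
    {D : Finset (Sym2 V)} (hD : ∀ e ∈ D, e ∈ p.edges) (hne : D.Nonempty) :
    ¬ IsEvenEdgeSet D := by
  induction p with
  | nil =>
    obtain ⟨e, he⟩ := hne
    simpa using hD e he
  | @cons a c b h q ih =>
    rw [cons_isPath_iff] at hp
    have hDq : ∀ e ∈ D, e = s(a, c) ∨ e ∈ q.edges := fun e he => by simpa using hD e he
    by_cases hfirst : s(a, c) ∈ D
    · have hleaf : ({e ∈ D | a ∈ e} : Finset (Sym2 V)) = {s(a, c)} := by
        ext e
        rw [mem_filter, mem_singleton]
        refine ⟨fun ⟨he, hae⟩ => ?_, fun h => h ▸ ⟨hfirst, Sym2.mem_mk_left _ _⟩⟩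
        refine (hDq e he).resolve_right fun heq => hp.2 ?_
        obtain ⟨z, rfl⟩ := Sym2.mem_iff_exists.mp hae
        exact q.fst_mem_support_of_mem_edges heq
      intro hev
      simpa [hleaf] using hev a
    · exact ih hp.1 (fun e he => (hDq e he).resolve_left fun h => hfirst (h ▸ he))

theorem IsCycle.exists_isPath_edges_perm {u : V} {c : G.Walk u u} (hc : c.IsCycle)
    {e : Sym2 V} (he : e ∈ c.edges) :
    ∃ (a b : V) (p : G.Walk a b), p.IsPath ∧ c.edges.Perm (e :: p.edges) := by
  induction e using Sym2.ind with | _ a b =>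
  have ha : a ∈ c.support := c.fst_mem_support_of_mem_edges he
  have hfirst : ∀ d : G.Walk a a, d.IsCycle → d.edges = s(a, d.snd) :: d.tail.edges :=
    fun d hd => by conv_lhs => rw [← cons_tail_eq d hd.not_nil, edges_cons]
  -- after rotating `c` to start at `a`, the edge `s(a, b)` is its first or its last edge
  set d := c.rotate a ha
  have hd : d.IsCycle := hc.rotate ha
  have hperm : c.edges.Perm d.edges := (rotate_edges c a ha).perm.symm
  have hb : b ∈ d.toSubgraph.neighborSet a :=
    (Subgraph.mem_edgeSet).mp ((mem_edges_toSubgraph d).mpr (hperm.subset he))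
  rw [hd.neighborSet_toSubgraph_endpoint] at hb
  rcases hb with rfl | rfl
  · exact ⟨_, _, d.tail, hd.isPath_tail, by rw [← hfirst d hd]; exact hperm⟩
  · refine ⟨_, _, d.reverse.tail, hd.reverse.isPath_tail, ?_⟩
    rw [← snd_reverse, ← hfirst _ hd.reverse, edges_reverse]
    exact hperm.trans (List.reverse_perm _).symm

theorem IsCycle.edges_toFinset_nonempty {u : V} {c : G.Walk u u} (hc : c.IsCycle) :
    c.edges.toFinset.Nonempty := by
  simpa [List.toFinset_nonempty_iff, edges_eq_nil] using hc.not_nil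

theorem IsCycle.not_isEvenEdgeSet_of_ssubset {u : V} {c : G.Walk u u} (hc : c.IsCycle)
    {D : Finset (Sym2 V)} (hD : ↑D ⊂ {e | e ∈ c.edges}) (hne : D.Nonempty) :
    ¬ IsEvenEdgeSet D := by
  obtain ⟨e, he, heD⟩ := Set.exists_of_ssubset hD
  obtain ⟨a, b, p, hp, hperm⟩ := hc.exists_isPath_edges_perm he
  refine hp.not_isEvenEdgeSet (fun f hf => ?_) hne
  exact (List.mem_cons.mp (hperm.subset (hD.subset hf))).resolve_left fun h => heD (h ▸ hf)

end Walk

end SimpleGraph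

open SimpleGraph

theorem edge_set_minimally_dependent_iff_cycle_general
    {V : Type*} [DecidableEq V] (G : SimpleGraph V)
    (H : Matrix V G.edgeSet (ZMod 2))
    (hH : ∀ (v : V) (e : G.edgeSet), H v e = if v ∈ (e : Sym2 V) then 1 else 0)
    (C : Set G.edgeSet) :
    ((¬ LinearIndependent (ZMod 2) fun e : C => fun v => H v e.1) ∧
      ∀ S : Set G.edgeSet, S ⊂ C →
        LinearIndependent (ZMod 2) fun e : S => fun v => H v e.1)
    ↔ ∃ (u : V) (w : G.Walk u u), w.IsCycle ∧
        {s : Sym2 V | s ∈ w.edges} = Subtype.val '' C := by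
  simp only [linearIndependent_incidence_columns_iff hH, not_forall, exists_prop]
  constructor
  · rintro ⟨⟨D, hDC, hD, hDne⟩, hmin⟩
    obtain ⟨u, w, hw, hwD⟩ := exists_isCycle_of_isEvenEdgeSet
      (hDC.trans (Set.image_val_subset)) hD (nonempty_iff_ne_empty.mpr hDne)
    have hwC : {e | e ∈ w.edges} ⊆ Subtype.val '' C := fun e he => hDC (hwD e he)
    refine ⟨u, w, hw, hwC.antisymm ?_⟩
    -- by minimality, `C` cannot strictly contain the edges of the cycle, which are even
    rintro _ ⟨c, hc, rfl⟩
    by_contra hcw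
    have hS : C ∩ Subtype.val ⁻¹' {e | e ∈ w.edges} ⊂ C :=
      ⟨Set.inter_subset_left, fun h => hcw (h hc).2⟩
    refine hw.edges_toFinset_nonempty.ne_empty
      (hmin _ hS _ (fun f hf => ?_) hw.isCircuit.isTrail.isEvenEdgeSet_edges_toFinset)
    obtain ⟨d, hd, rfl⟩ := hwC (List.mem_toFinset.mp hf)
    exact ⟨d, ⟨hd, List.mem_toFinset.mp hf⟩, rfl⟩
  · rintro ⟨u, w, hw, hwC⟩
    refine ⟨⟨w.edges.toFinset, by simp [hwC], hw.isCircuit.isTrail.isEvenEdgeSet_edges_toFinset,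
      hw.edges_toFinset_nonempty.ne_empty⟩, fun S hSC D hDS hD => ?_⟩
    by_contra hDne
    refine hw.not_isEvenEdgeSet_of_ssubset ?_ (nonempty_iff_ne_empty.mpr hDne) hD
    rw [hwC]
    exact hDS.trans_ssubset (Subtype.val_injective.image_strictMono hSC)

/-- `C` is the edge set of a circuit of a graph `G` if, and only if, `C` is a circuit
of the graphic matroid `M(G)`: for a simple graph `G` with incidence matrix `H` over
`ZMod 2`, a nonempty finite set `C` of edges indexes a minimally dependent family of
columns of `H` iff `C` is the edge set of a cycle of `G`. -/
theorem edge_set_minimally_dependent_iff_cycle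
    {V : Type*} [Fintype V] [DecidableEq V] (G : SimpleGraph V)
    (H : Matrix V G.edgeSet (ZMod 2))
    (hH : ∀ (v : V) (e : G.edgeSet), H v e = if v ∈ (e : Sym2 V) then 1 else 0)
    (C : Set G.edgeSet) (hfin : C.Finite) (hne : C.Nonempty) :
    ((¬ LinearIndependent (ZMod 2) fun e : C => fun v => H v e.1) ∧
      ∀ S : Set G.edgeSet, S ⊂ C →
        LinearIndependent (ZMod 2) fun e : S => fun v => H v e.1)
    ↔ ∃ (u : V) (w : G.Walk u u), w.IsCycle ∧
        {s : Sym2 V | s ∈ w.edges} = Subtype.val '' C :=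
  edge_set_minimally_dependent_iff_cycle_general G H hH C
end

section
/- Let F be a field, V and E finite types, and M : Matrix V E F. If there exists a row v : V having exactly one nonzero entry (i.e., there is exactly one column e with M v e ≠ 0), and E has at least one element, then the full family of columns of M is not minimally dependent. -/
/-- The full family of columns of a matrix `M : Matrix V E F` is *minimally dependent*
if it is linearly dependent but the columns indexed by any proper subset of `E` are
linearly independent. -/
def MinimallyDependent {F V E : Type*} [Field F] (M : Matrix V E F) : Prop :=
  (¬ LinearIndependent F fun e : E => fun v => M v e) ∧
    ∀ S : Set E, S ⊂ Set.univ →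
      LinearIndependent F fun e : S => fun v => M v e.1

/-! Evaluation at the monovalent row `v` is a linear functional that kills every column except
the one at `e₀`, which it does not kill. Hence that column lies outside the span of the others, and
since the other columns are independent by minimality, all the columns would be independent. -/

open Submodule Set

theorem LinearIndepOn.insert_of_map_eq_zero {ι K W : Type*} [DivisionRing K] [AddCommGroup W]
    [Module K W] {v : ι → W} {s : Set ι} {x : ι} (hs : LinearIndepOn K v s) (f : W →ₗ[K] K)
    (hf : ∀ i ∈ s, f (v i) = 0) (hx : f (v x) ≠ 0) : LinearIndepOn K v (insert x s) := by
  have hspan : span K (v '' s) ≤ LinearMap.ker f :=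
    span_le.mpr <| image_subset_iff.mpr hf
  exact hs.insert fun hmem => hx (hspan hmem)

theorem not_minimallyDependent_of_monovalent_general
    {F V E : Type*} [Field F]
    (M : Matrix V E F) (v : V) (hv : ∃! e : E, M v e ≠ 0) :
    ¬ MinimallyDependent M := by
  rintro ⟨hdep, hind⟩
  obtain ⟨e₀, he₀, huniq⟩ := hv
  have hrest : LinearIndepOn F (fun e w => M w e) ({e₀}ᶜ : Set E) :=
    hind _ (compl_ssubset_univ.mpr (singleton_nonempty e₀))
  have hvanish : ∀ e ∈ ({e₀}ᶜ : Set E), LinearMap.proj (R := F) v (fun w => M w e) = 0 :=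
    fun e he => not_not.mp fun hne => he (huniq e hne)
  have hall := hrest.insert_of_map_eq_zero _ hvanish he₀
  rw [insert_eq, union_compl_self, linearIndepOn_univ_iff] at hall
  exact hdep hall

/-- If some row `v` of `M` has exactly one nonzero entry (a monovalent vertex), and
there is at least one column, then the columns of `M` are not minimally dependent. -/
theorem not_minimallyDependent_of_monovalent
    {F V E : Type*} [Field F] [Fintype V] [Fintype E] [Nonempty E]
    (M : Matrix V E F) (v : V) (hv : ∃! e : E, M v e ≠ 0) :
    ¬ MinimallyDependent M :=
  not_minimallyDependent_of_monovalent_general M v hv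
end

section
/- Let F be a field, V and E finite types, and M : Matrix V E F whose full family of columns is minimally dependent. Suppose v : V and e₁ ≠ e₂ in E satisfy: M v e₁ ≠ 0, M v e₂ = - M v e₁, and M v e = 0 for all e ∉ {e₁, e₂}. Define M' : Matrix {w : V // w ≠ v} {e : E // e ≠ e₂} F by M' w e = M w e for e ≠ e₁ and M' w e₁ = M w e₁ + M w e₂. Then the full family of columns of M' is minimally dependent. -/
/-- Extension of a coefficient family on `{e // e ≠ e₂}` to `E`, putting on `e₂`
the coefficient of `e₁`. -/
def contractCoef {F E : Type*} [Field F] [DecidableEq E] (e₁ e₂ : E) (hne : e₁ ≠ e₂)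
    (c : {e : E // e ≠ e₂} → F) (e : E) : F :=
  if h : e = e₂ then c ⟨e₁, hne⟩ else c ⟨e, h⟩

/-- 2-vertex-contraction preserves minimal dependence: if `v` is a compatibly oriented
degree-2 vertex (its row is nonzero exactly in columns `e₁, e₂`, with cancelling
entries), then merging the columns `e₁` and `e₂` into one and deleting the row `v`
yields a matrix whose columns are again minimally dependent. -/
theorem minimallyDependent_of_two_vertex_contraction
    {F V E : Type*} [Field F] [Fintype V] [Fintype E]
    [DecidableEq V] [DecidableEq E]
    (M : Matrix V E F) (h : MinimallyDependent M)
    (v : V) (e₁ e₂ : E) (hne : e₁ ≠ e₂)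
    (h1 : M v e₁ ≠ 0) (h2 : M v e₂ = - M v e₁)
    (h0 : ∀ e : E, e ≠ e₁ → e ≠ e₂ → M v e = 0)
    (M' : Matrix {w : V // w ≠ v} {e : E // e ≠ e₂} F)
    (hM' : ∀ (w : {w : V // w ≠ v}) (e : {e : E // e ≠ e₂}),
      M' w e = if e.1 = e₁ then M w.1 e₁ + M w.1 e₂ else M w.1 e.1) :
    MinimallyDependent M' := by
  classical
  set d : ({e : E // e ≠ e₂} → F) → E → F := contractCoef e₁ e₂ hne with hd
  have hde₂ : ∀ c, d c e₂ = c ⟨e₁, hne⟩ := by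
    intro c; simp [hd, contractCoef]
  have hdne : ∀ c (e : E) (he : e ≠ e₂), d c e = c ⟨e, he⟩ := by
    intro c e he; simp [hd, contractCoef, he]
  -- key: row-wise identity relating M' sums to M sums
  have key : ∀ (c : {e : E // e ≠ e₂} → F) (w : {w : V // w ≠ v}),
      ∑ e' : {e : E // e ≠ e₂}, c e' * M' w e' = ∑ e : E, d c e * M w.1 e := by
    intro c w
    have hR : ∑ e : E, d c e * M w.1 e
        = (∑ e ∈ Finset.univ.erase e₂, d c e * M w.1 e) + d c e₂ * M w.1 e₂ :=
      (Finset.sum_erase_add _ _ (Finset.mem_univ e₂)).symm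
    have hsub : ∑ e ∈ Finset.univ.erase e₂, d c e * M w.1 e
        = ∑ e' : {e : E // e ≠ e₂}, d c e'.1 * M w.1 e'.1 := by
      apply Finset.sum_subtype
      intro x; simp
    have hL : ∑ e' : {e : E // e ≠ e₂}, c e' * M' w e'
        = ∑ e' : {e : E // e ≠ e₂},
            (c e' * M w.1 e'.1 + if e' = (⟨e₁, hne⟩ : {e : E // e ≠ e₂}) then c e' * M w.1 e₂ else 0) := by
      apply Finset.sum_congr rfl
      intro e' _
      rw [hM']
      obtain ⟨e, he⟩ := e'
      by_cases hcase : e = e₁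
      · subst hcase
        rw [if_pos rfl, if_pos rfl]
        ring
      · rw [if_neg hcase, if_neg (by simp [Subtype.ext_iff, hcase])]
        ring
    rw [hL, Finset.sum_add_distrib, Finset.sum_ite_eq' Finset.univ
      (⟨e₁, hne⟩ : {e : E // e ≠ e₂}) (fun e' => c e' * M w.1 e₂) ,
      if_pos (Finset.mem_univ _), hR, hsub, hde₂]
    congr 1
    apply Finset.sum_congr rfl
    intro e' _
    rw [hdne c e'.1 e'.2]
  -- sum over E of a function supported on {e₁, e₂}
  have sum_two : ∀ f : E → F, (∀ e, e ≠ e₁ → e ≠ e₂ → f e = 0) →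
      ∑ e : E, f e = f e₁ + f e₂ := by
    intro f hf
    rw [← Finset.sum_subset (Finset.subset_univ ({e₁, e₂} : Finset E))]
    · rw [Finset.sum_pair hne]
    · intro x _ hx
      simp only [Finset.mem_insert, Finset.mem_singleton, not_or] at hx
      exact hf x hx.1 hx.2
  -- row v vanishes for extended coefficients
  have rowv : ∀ c, ∑ e : E, d c e * M v e = 0 := by
    intro c
    rw [sum_two (fun e => d c e * M v e)
      (fun e he1 he2 => by simp [h0 e he1 he2])]
    rw [hde₂, hdne c e₁ hne, h2]
    ring
  -- pointwise version of a function-level dependency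
  have ptw : ∀ (g : E → F), (∑ e : E, g e • (fun w => M w e)) = 0 →
      ∀ w : V, ∑ e : E, g e * M w e = 0 := by
    intro g hg w
    have := congrFun hg w
    simpa using this
  -- full support lemma: any dependency of M vanishing somewhere vanishes everywhere
  have full : ∀ g : E → F, (∑ e : E, g e • (fun w => M w e)) = 0 →
      ∀ e0 : E, g e0 = 0 → ∀ e, g e = 0 := by
    intro g hg e0 hg0 e
    by_cases he : e = e0
    · rwa [he]
    · set S : Set E := {x | x ≠ e0} with hS
      have hSs : S ⊂ Set.univ :=
        ⟨Set.subset_univ _, fun hsub => (hsub (Set.mem_univ e0) : e0 ∈ S) rfl⟩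
      have hli := h.2 S hSs
      haveI : Fintype ↥S := Fintype.ofFinite _
      have hsum : ∑ e' : ↥S, g e'.1 • (fun w => M w e'.1) = 0 := by
        have h1' : ∑ x ∈ Finset.univ.erase e0, g x • (fun w => M w x)
            = ∑ e' : ↥S, g e'.1 • (fun w => M w e'.1) := by
          apply Finset.sum_subtype
          intro x; simp [hS]
        rw [← h1', Finset.sum_erase _ (by rw [hg0, zero_smul]), hg]
      exact Fintype.linearIndependent_iff.mp hli (fun e' => g e'.1) hsum ⟨e, he⟩
  constructor
  · -- columns of M' are dependent
    obtain ⟨g, hg, estar, hge⟩ := Fintype.not_linearIndependent_iff.mp h.1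
    have hfull : ∀ e, g e ≠ 0 := fun e he => hge (full g hg e he estar)
    have hrow := ptw g hg v
    have heq : g e₂ = g e₁ := by
      rw [sum_two (fun e => g e * M v e)
        (fun e he1 he2 => by simp [h0 e he1 he2]), h2] at hrow
      have hz : (g e₁ - g e₂) * M v e₁ = 0 := by linear_combination hrow
      rcases mul_eq_zero.mp hz with hz | hz
      · exact (sub_eq_zero.mp hz).symm
      · exact absurd hz h1
    rw [Fintype.not_linearIndependent_iff]
    refine ⟨fun e' => g e'.1, ?_, ⟨⟨e₁, hne⟩, hfull e₁⟩⟩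
    funext w
    have hdg : d (fun e' => g e'.1) = g := by
      funext e
      by_cases he : e = e₂
      · subst he; rw [hde₂, heq]
      · rw [hdne _ e he]
    simp only [Finset.sum_apply, Pi.smul_apply, smul_eq_mul, Pi.zero_apply]
    rw [key (fun e' => g e'.1) w, hdg]
    exact ptw g hg w.1
  · -- proper subsets of columns of M' are independent
    intro S hS
    haveI : Fintype ↥S := Fintype.ofFinite _
    rw [Fintype.linearIndependent_iff]
    intro gS hgS
    obtain ⟨ex0, hex0S⟩ : ∃ x : {e : E // e ≠ e₂}, x ∉ S := by
      by_contra hall; push_neg at hall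
      exact hS.2 fun x _ => hall x
    set c : {e : E // e ≠ e₂} → F := fun e' => if hm : e' ∈ S then gS ⟨e', hm⟩ else 0 with hc
    -- c gives a dependency of M'
    have hcsum : ∀ w : {w : V // w ≠ v}, ∑ e', c e' * M' w e' = 0 := by
      intro w
      have hpt := congrFun hgS w
      simp only [Finset.sum_apply, Pi.smul_apply, smul_eq_mul, Pi.zero_apply] at hpt
      have hfil : ∑ e' ∈ Finset.univ.filter (· ∈ S), c e' * M' w e'
          = ∑ e' : {e : E // e ≠ e₂}, c e' * M' w e' := by
        apply Finset.sum_filter_of_ne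
        intro x _ hx
        by_contra hxS
        apply hx
        rw [hc]; simp [hxS]
      rw [← hfil]
      have hsub : ∑ e' ∈ Finset.univ.filter (· ∈ S), c e' * M' w e'
          = ∑ x : ↥S, c x.1 * M' w x.1 := by
        apply Finset.sum_subtype
        intro x; simp
      rw [hsub, ← hpt]
      apply Finset.sum_congr rfl
      intro x _
      congr 1
      rw [hc]; simp [x.2]
    -- extend to a dependency of M
    have hall : ∑ e : E, d c e • (fun w => M w e) = 0 := by
      funext w
      simp only [Finset.sum_apply, Pi.smul_apply, smul_eq_mul, Pi.zero_apply]
      by_cases hw : w = v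
      · subst hw; exact rowv c
      · rw [← key c ⟨w, hw⟩]
        exact hcsum ⟨w, hw⟩
    have h0' : d c ex0.1 = 0 := by
      rw [hdne c ex0.1 ex0.2, hc]
      simp [hex0S]
    have hdz := full (d c) hall ex0.1 h0'
    intro x
    have h1' : c x.1 = 0 := by
      rw [← hdne c x.1.1 x.1.2]
      exact hdz _
    rw [hc] at h1'
    simpa [x.2] using h1'
end

section
/- Let F be a field and M : Matrix (Fin m) (Fin n) F a matrix whose full family of columns is minimally dependent. Let d₁, d₂ : Fin m → F satisfy d₁ + d₂ = (column 0 of M). Define M' : Matrix (Fin (m+1)) (Fin (n+1)) F by: for i : Fin m, M' i 0 = d₁ i, M' i 1 = d₂ i, and M' i (j+2) = M i (j+1) for j+1 < n; and for the new last row r = m: M' r 0 = 1, M' r 1 = -1, and M' r (j+2) = 0. Then the full family of columns of M' is minimally dependent. -/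
theorem linearIndepOn_compl_singleton_iff {R M ι : Type*} [Ring R] [AddCommGroup M]
    [Module R M] [Fintype ι] {v : ι → M} {e : ι} :
    LinearIndepOn R v {e}ᶜ ↔ ∀ g : ι → R, ∑ i, g i • v i = 0 → g e = 0 → g = 0 := by
  classical
  have hcoe : ((Finset.univ.erase e : Finset ι) : Set ι) = {e}ᶜ := by
    simp [Finset.coe_erase, Set.compl_eq_univ_sdiff]
  rw [linearIndepOn_iff'']
  constructor
  · intro h g hg he
    have hsum : ∑ i ∈ Finset.univ.erase e, g i • v i = 0 := by
      rwa [Finset.sum_erase _ (by simp [he])]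
    have hsupp : ∀ i ∉ Finset.univ.erase e, g i = 0 := by simp_all
    funext i
    by_cases hi : i = e
    · rw [hi, he, Pi.zero_apply]
    · exact h _ g hcoe.le hsupp hsum i (by simp [hi])
  · intro h t g hts hsupp hsum i hi
    have he : g e = 0 := hsupp e fun het => hts het rfl
    have hsum' : ∑ i, g i • v i = 0 := by
      rwa [← Finset.sum_subset (Finset.subset_univ t) fun i _ hit => by simp [hsupp i hit]]
    exact congrFun (h g hsum' he) i

namespace Matrix

theorem sum_smul_cols {R V E : Type*} [CommSemiring R] [Fintype E] (M : Matrix V E R)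
    (c : E → R) : ∑ e, c e • (fun v => M v e) = M *ᵥ c := by
  funext v
  simp [mulVec, dotProduct, mul_comm]

end Matrix

open Matrix in
theorem minimallyDependent_iff {F V E : Type*} [Field F] [Fintype E] (M : Matrix V E F) :
    MinimallyDependent M ↔
      (∃ c ≠ 0, M *ᵥ c = 0) ∧ ∀ e c, M *ᵥ c = 0 → c e = 0 → c = 0 := by
  have hdep : (¬ LinearIndependent F fun e v => M v e) ↔ ∃ c ≠ 0, M *ᵥ c = 0 := by
    simp only [Fintype.not_linearIndependent_iff, sum_smul_cols, Ne, funext_iff,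
      Pi.zero_apply, not_forall]
    tauto
  have hproper : (∀ S : Set E, S ⊂ Set.univ → LinearIndepOn F (fun e v => M v e) S) ↔
      ∀ e, LinearIndepOn F (fun e v => M v e) {e}ᶜ := by
    refine ⟨fun h e => h _ ?_, fun h S hS => ?_⟩
    · exact Set.ssubset_univ_iff.mpr (by simp)
    · obtain ⟨e, -, he⟩ := Set.exists_of_ssubset hS
      exact (h e).mono fun x hx hxe => he (hxe ▸ hx)
  simp only [linearIndepOn_compl_singleton_iff, sum_smul_cols] at hproper
  rw [MinimallyDependent, hdep]
  exact and_congr_right' hproper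

structure IsCompatibleColumnSplitting {R : Type*} [Ring R] {m n : ℕ}
    (M : Matrix (Fin m) (Fin (n + 1)) R) (M' : Matrix (Fin (m + 1)) (Fin (n + 2)) R) : Prop where
  split_col : ∀ i : Fin m, M' i.castSucc 0 + M' i.castSucc 1 = M i 0
  other_cols : ∀ (i : Fin m) (j : Fin n), M' i.castSucc j.succ.succ = M i j.succ
  last_zero : M' (Fin.last m) 0 = 1
  last_one : M' (Fin.last m) 1 = -1
  last_other : ∀ j : Fin n, M' (Fin.last m) j.succ.succ = 0

namespace IsCompatibleColumnSplitting

open Matrix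

variable {R : Type*} [CommRing R] {m n : ℕ} {M : Matrix (Fin m) (Fin (n + 1)) R}
  {M' : Matrix (Fin (m + 1)) (Fin (n + 2)) R}

theorem mulVec_last (h : IsCompatibleColumnSplitting M M') (b : Fin (n + 2) → R) :
    (M' *ᵥ b) (Fin.last m) = b 0 - b 1 := by
  simp [mulVec, dotProduct, Fin.sum_univ_succ, h.last_zero, h.last_one, h.last_other,
    sub_eq_add_neg]

theorem mulVec_castSucc (h : IsCompatibleColumnSplitting M M') {b : Fin (n + 2) → R}
    (hb : b 0 = b 1) (i : Fin m) : (M' *ᵥ b) i.castSucc = (M *ᵥ Fin.tail b) i := by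
  simp only [mulVec, dotProduct, Fin.sum_univ_succ (n := n + 1), Fin.sum_univ_succ (n := n),
    Fin.succ_zero_eq_one, h.other_cols, ← h.split_col, Fin.tail, hb]
  ring

theorem mulVec_eq_zero_iff (h : IsCompatibleColumnSplitting M M') (b : Fin (n + 2) → R) :
    M' *ᵥ b = 0 ↔ b 0 = b 1 ∧ M *ᵥ Fin.tail b = 0 := by
  simp only [funext_iff, Pi.zero_apply]
  rw [Fin.forall_fin_succ', h.mulVec_last, sub_eq_zero, and_comm]
  refine and_congr_right fun hb => ?_
  simp only [h.mulVec_castSucc hb]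

theorem minimallyDependent {F : Type*} [Field F] {M : Matrix (Fin m) (Fin (n + 1)) F}
    {M' : Matrix (Fin (m + 1)) (Fin (n + 2)) F} (h : IsCompatibleColumnSplitting M M')
    (hM : MinimallyDependent M) : MinimallyDependent M' := by
  rw [minimallyDependent_iff] at hM ⊢
  obtain ⟨⟨a, ha₀, ha⟩, hfull⟩ := hM
  refine ⟨⟨Fin.cons (a 0) a, fun h₀ => ha₀ ?_, ?_⟩, fun k b hb hk => ?_⟩
  · exact congrArg Fin.tail h₀
  · simp [h.mulVec_eq_zero_iff, ha]
  · obtain ⟨h01, hker⟩ := (h.mulVec_eq_zero_iff b).mp hb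
    have htail : Fin.tail b = 0 := by
      cases k using Fin.cases with
      | zero => exact hfull 0 _ hker (by simpa [Fin.tail, ← h01] using hk)
      | succ j => exact hfull j _ hker hk
    have hb1 : b 1 = 0 := congrFun htail 0
    rw [← Fin.cons_self_tail b, htail, h01, hb1]
    exact Fin.cons_self_tail 0

end IsCompatibleColumnSplitting

/-- Compatible column splitting preserves minimal dependence: if column `0` of a
minimally dependent matrix `M` is split into two columns `d₁, d₂` with
`d₁ + d₂ = column 0`, a new row is appended with entries `1` and `-1` in the two new
columns and `0` elsewhere, then the resulting matrix `M'` is minimally dependent. -/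
theorem minimallyDependent_of_compatible_column_splitting
    {F : Type*} [Field F] {m n : ℕ} (hn : 0 < n)
    (M : Matrix (Fin m) (Fin n) F) (hM : MinimallyDependent M)
    (d₁ d₂ : Fin m → F) (hd : ∀ i : Fin m, d₁ i + d₂ i = M i ⟨0, hn⟩)
    (M' : Matrix (Fin (m + 1)) (Fin (n + 1)) F)
    (h0 : ∀ i : Fin m, M' i.castSucc ⟨0, by omega⟩ = d₁ i)
    (h1 : ∀ i : Fin m, M' i.castSucc ⟨1, by omega⟩ = d₂ i)
    (h2 : ∀ (i : Fin m) (j : ℕ) (hj : j + 1 < n),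
      M' i.castSucc ⟨j + 2, by omega⟩ = M i ⟨j + 1, hj⟩)
    (hr0 : M' (Fin.last m) ⟨0, by omega⟩ = 1)
    (hr1 : M' (Fin.last m) ⟨1, by omega⟩ = -1)
    (hr2 : ∀ (j : ℕ) (hj : j + 1 < n), M' (Fin.last m) ⟨j + 2, by omega⟩ = 0) :
    MinimallyDependent M' := by
  obtain ⟨N, rfl⟩ : ∃ N, n = N + 1 := ⟨n - 1, by omega⟩
  simp only [Fin.zero_eta, Fin.mk_one] at hd h0 h1 hr0 hr1
  refine IsCompatibleColumnSplitting.minimallyDependent ⟨fun i => ?_, fun i j => ?_, hr0, hr1,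
    fun j => hr2 j (by omega)⟩ hM
  · rw [h0, h1, hd]
  · exact h2 i j (by omega)
end

section
/- Let F be a field, n ≥ 1, d : Fin n → F with d i ≠ 0 for all i, and c : Fin n → F with c i ≠ 0 for all i. Let M : Matrix (Fin n) (Fin (n+1)) F be the matrix whose first n columns form the diagonal matrix with diagonal entries d (i.e., M i j = d i if i = j < n, and 0 if i ≠ j < n) and whose last column is c. Then the full family of columns of M is minimally dependent. -/
theorem minimallyDependent_of_linearIndepOn_compl_singleton {F V E : Type*} [Field F]
    (M : Matrix V E F) (hdep : ¬ LinearIndependent F fun e v => M v e)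
    (hind : ∀ p : E, LinearIndepOn F (fun e v => M v e) {p}ᶜ) : MinimallyDependent M := by
  refine ⟨hdep, fun S hS => ?_⟩
  obtain ⟨p, -, hpS⟩ := Set.exists_of_ssubset hS
  exact (hind p).mono (Set.subset_compl_singleton_iff.mpr hpS)

theorem Fin.compl_singleton_last (n : ℕ) :
    ({Fin.last n}ᶜ : Set (Fin (n + 1))) = Fin.castSucc '' Set.univ := by
  ext i
  cases i using Fin.lastCases <;> simp [Fin.castSucc_ne_last]

theorem Fin.compl_singleton_castSucc {n : ℕ} (j : Fin n) :
    ({j.castSucc}ᶜ : Set (Fin (n + 1))) = insert (Fin.last n) (Fin.castSucc '' {j}ᶜ) := by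
  ext i
  cases i using Fin.lastCases <;> simp [Fin.castSucc_ne_last, (Fin.castSucc_ne_last _).symm]

namespace Module.Basis

variable {F V : Type*} [Field F] [AddCommGroup V] [Module F V] {n : ℕ}
  (b : Basis (Fin n) F V) (x : V)

theorem not_linearIndependent_finSnoc :
    ¬ LinearIndependent F (Fin.snoc b x : Fin (n + 1) → V) := by
  rw [linearIndependent_finSnoc]
  exact fun h => h.2 (b.mem_span x)

theorem linearIndepOn_finSnoc_image_castSucc (T : Set (Fin n)) :
    LinearIndepOn F (Fin.snoc b x : Fin (n + 1) → V) (Fin.castSucc '' T) :=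
  .image_of_comp _ _ (by simpa [Function.comp_def] using b.linearIndependent.linearIndepOn T)

theorem linearIndepOn_finSnoc_compl_singleton (hx : ∀ i, b.repr x i ≠ 0) (p : Fin (n + 1)) :
    LinearIndepOn F (Fin.snoc b x : Fin (n + 1) → V) {p}ᶜ := by
  cases p using Fin.lastCases with
  | last =>
    rw [Fin.compl_singleton_last]
    exact b.linearIndepOn_finSnoc_image_castSucc x _
  | cast j =>
    rw [Fin.compl_singleton_castSucc, linearIndepOn_insert (by simp [Fin.castSucc_ne_last])]
    refine ⟨b.linearIndepOn_finSnoc_image_castSucc x _, ?_⟩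
    rw [Set.image_image]
    simp only [Fin.snoc_castSucc, Fin.snoc_last]
    rw [b.mem_span_image]
    exact fun h => h (Finsupp.mem_support_iff.mpr (hx j)) rfl

end Module.Basis

theorem minimallyDependent_diagonal_with_full_column_general
    {F : Type*} [Field F] {n : ℕ}
    (d : Fin n → F) (hd : ∀ i, d i ≠ 0) (c : Fin n → F) (hc : ∀ i, c i ≠ 0)
    (M : Matrix (Fin n) (Fin (n + 1)) F)
    (hdiag : ∀ i j : Fin n, M i j.castSucc = if i = j then d i else 0)
    (hlast : ∀ i : Fin n, M i (Fin.last n) = c i) :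
    MinimallyDependent M := by
  set b := (Pi.basisFun F (Fin n)).isUnitSMul fun i => (hd i).isUnit
  have hcols : (fun e i => M i e) = (Fin.snoc b c : Fin (n + 1) → Fin n → F) := by
    ext e i
    cases e using Fin.lastCases with
    | last => simp [hlast]
    | cast j =>
      simp only [Fin.snoc_castSucc, b, Module.Basis.isUnitSMul_apply, hdiag, Pi.basisFun_apply]
      by_cases hij : i = j <;> simp [hij]
  have hrepr : ∀ i, b.repr c i ≠ 0 := fun i => by
    simp [b, Module.Basis.repr_isUnitSMul, Units.smul_def, hd, hc]
  refine minimallyDependent_of_linearIndepOn_compl_singleton M ?_ fun p => ?_ <;> rw [hcols]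
  · exact b.not_linearIndependent_finSnoc c
  · exact b.linearIndepOn_finSnoc_compl_singleton c hrepr p

/-- The incidence matrix of a single `n`-edge with a `1`-edge attached at each of its
vertices — an `n × (n+1)` matrix whose first `n` columns form a diagonal matrix with
nonzero diagonal `d` and whose last column `c` has all entries nonzero — has minimally
dependent columns. -/
theorem minimallyDependent_diagonal_with_full_column
    {F : Type*} [Field F] {n : ℕ} (hn : 1 ≤ n)
    (d : Fin n → F) (hd : ∀ i, d i ≠ 0) (c : Fin n → F) (hc : ∀ i, c i ≠ 0)
    (M : Matrix (Fin n) (Fin (n + 1)) F)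
    (hdiag : ∀ i j : Fin n, M i j.castSucc = if i = j then d i else 0)
    (hlast : ∀ i : Fin n, M i (Fin.last n) = c i) :
    MinimallyDependent M :=
  minimallyDependent_diagonal_with_full_column_general d hd c hc M hdiag hlast
end
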